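/- arXiv:2605.18717 — 2 statements merged into one kernel-verified Lean document; each statement's English description precedes it below -/
import Mathlib

section
/- Let p be a prime, W ∈ L¹(ℤ_p), Z ∈ L¹(ℤ_p), α > 0, and φ : ℝ → ℝ Lipschitz with constant L_φ with L_φ‖W‖₁/α < 1. Then the equation U(x) = (1/α) φ(∫_{ℤ_p} W(|x−y|_p) U(y) dy + Z(x)) has a unique solution U ∈ L¹(ℤ_p). -/
/-!
Write `T U (x) = φ((W ⋆ U)(x) + Z(x)) / α`. Since the Haar measure of `ℤ_p` is finite and `φ`
grows at most linearly, `T` maps `L¹` to `L¹`. Pointwise `|W ⋆ (U - V)| ≤ |W| ⋆ |U - V|`, and by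
Fubini `‖|W| ⋆ |U - V|‖₁ = ‖W‖₁ ‖U - V‖₁`, so `T` is a contraction of `L¹` with constant
`L_φ ‖W‖₁ / α < 1`; Banach's fixed point theorem in the complete space `L¹` gives the unique
solution.
-/

open MeasureTheory
open scoped Convolution NNReal

noncomputable instance (p : ℕ) [Fact p.Prime] : MeasurableSpace ℤ_[p] := borel _
instance (p : ℕ) [Fact p.Prime] : BorelSpace ℤ_[p] := ⟨rfl⟩

/-- The normalized Haar measure on the compact additive group ℤ_p (total mass 1). -/
noncomputable def haarZp (p : ℕ) [Fact p.Prime] : Measure ℤ_[p] :=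
  Measure.addHaarMeasure ⟨⟨Set.univ, isCompact_univ⟩, by simp⟩

instance (p : ℕ) [Fact p.Prime] : (haarZp p).IsAddHaarMeasure :=
  Measure.isAddHaarMeasure_addHaarMeasure _

theorem LipschitzWith.integrable_comp {α E F : Type*} [MeasurableSpace α] {μ : Measure α}
    [IsFiniteMeasure μ] [NormedAddCommGroup E] [NormedAddCommGroup F] {K : ℝ≥0} {φ : E → F}
    (hφ : LipschitzWith K φ) {g : α → E} (hg : Integrable g μ) :
    Integrable (fun x => φ (g x)) μ := by
  refine ((integrable_const ‖φ 0‖).add (hg.norm.const_mul K)).mono'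
    (hφ.continuous.comp_aestronglyMeasurable hg.1) (.of_forall fun x => ?_)
  calc ‖φ (g x)‖ ≤ ‖φ 0‖ + ‖φ (g x) - φ 0‖ := norm_le_norm_add_norm_sub' _ _
    _ ≤ ‖φ 0‖ + K * ‖g x‖ := by
      gcongr
      simpa using hφ.norm_sub_le (g x) 0

section L1Contraction

variable {α E : Type*} [MeasurableSpace α] {μ : Measure α} [NormedAddCommGroup E]
  {N : (α → E) → α → E} {K : ℝ≥0}

theorem MeasureTheory.Integrable.dist {f g : α → E} (hf : Integrable f μ) (hg : Integrable g μ) :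
    Integrable (fun x => dist (f x) (g x)) μ := by
  simpa only [dist_eq_norm, Pi.sub_apply] using (hf.sub hg).norm

theorem exists_integrable_ae_fixed_of_integral_dist_le [CompleteSpace E] (hK : K < 1)
    (hN_int : ∀ f, Integrable f μ → Integrable (N f) μ)
    (hN : ∀ f g, Integrable f μ → Integrable g μ →
      ∫ x, dist (N f x) (N g x) ∂μ ≤ K * ∫ x, dist (f x) (g x) ∂μ) :
    ∃ U, Integrable U μ ∧ U =ᵐ[μ] N U := by
  let T : (α →₁[μ] E) → α →₁[μ] E := fun f => (hN_int f (L1.integrable_coeFn f)).toL1 _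
  have hT : ∀ f, T f =ᵐ[μ] N f := fun f => Integrable.coeFn_toL1 _
  have hT_lip : LipschitzWith K T := .of_dist_le_mul fun f g => by
    rw [L1.dist_eq_integral_dist, L1.dist_eq_integral_dist,
      integral_congr_ae ((hT f).mp ((hT g).mono fun x hgx hfx => by rw [hfx, hgx]))]
    exact hN f g (L1.integrable_coeFn f) (L1.integrable_coeFn g)
  have hT_contr : ContractingWith K T := ⟨hK, hT_lip⟩
  let F := ContractingWith.fixedPoint T hT_contr
  have hF : T F = F := hT_contr.fixedPoint_isFixedPt
  exact ⟨F, L1.integrable_coeFn F, by simpa only [hF] using hT F⟩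

theorem ae_eq_of_ae_fixed_of_integral_dist_le (hK : K < 1) {U V : α → E}
    (hU : Integrable U μ) (hV : Integrable V μ) (hU_fix : U =ᵐ[μ] N U) (hV_fix : V =ᵐ[μ] N V)
    (hN : ∫ x, dist (N V x) (N U x) ∂μ ≤ K * ∫ x, dist (V x) (U x) ∂μ) :
    V =ᵐ[μ] U := by
  have h_le : ∫ x, dist (V x) (U x) ∂μ ≤ K * ∫ x, dist (V x) (U x) ∂μ :=
    calc ∫ x, dist (V x) (U x) ∂μ = ∫ x, dist (N V x) (N U x) ∂μ :=
          integral_congr_ae (hV_fix.mp (hU_fix.mono fun x hUx hVx => by simp only [hUx, hVx]))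
      _ ≤ K * ∫ x, dist (V x) (U x) ∂μ := hN
  have h_zero : ∫ x, dist (V x) (U x) ∂μ = 0 :=
    le_antisymm (by nlinarith [(K.coe_lt_one).2 hK]) (integral_nonneg fun _ => dist_nonneg)
  filter_upwards [(integral_eq_zero_iff_of_nonneg (fun _ => dist_nonneg) (hV.dist hU)).1 h_zero]
    with x hx
  exact dist_eq_zero.1 hx

end L1Contraction

section Convolution

variable {G : Type*} [MeasurableSpace G] {μ : Measure G}

theorem convolution_mul_apply [Sub G] (f W : G → ℝ) (x : G) :
    (f ⋆[ContinuousLinearMap.mul ℝ ℝ, μ] W) x = ∫ y, W (x - y) * f y ∂μ := by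
  simp only [convolution_def, ContinuousLinearMap.mul_apply', mul_comm]

theorem dist_convolution_mul_le [Sub G] {f g W : G → ℝ} {x : G}
    (hf : ConvolutionExistsAt f W x (ContinuousLinearMap.mul ℝ ℝ) μ)
    (hg : ConvolutionExistsAt g W x (ContinuousLinearMap.mul ℝ ℝ) μ) :
    dist ((f ⋆[ContinuousLinearMap.mul ℝ ℝ, μ] W) x) ((g ⋆[ContinuousLinearMap.mul ℝ ℝ, μ] W) x) ≤
      ((fun y => dist (f y) (g y)) ⋆[ContinuousLinearMap.mul ℝ ℝ, μ] fun y => ‖W y‖) x := by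
  rw [convolution_def, convolution_def, convolution_def, dist_eq_norm, ← integral_sub hf hg]
  refine (norm_integral_le_integral_norm _).trans_eq ?_
  simp only [ContinuousLinearMap.mul_apply', ← sub_mul, norm_mul, dist_eq_norm]

end Convolution

noncomputable def hammersteinMap {G : Type*} [MeasurableSpace G] [Sub G] (μ : Measure G) (c : ℝ)
    (φ : ℝ → ℝ) (W Z f : G → ℝ) : G → ℝ :=
  fun x => c * φ ((∫ y, W (x - y) * f y ∂μ) + Z x)

section HammersteinMap

variable {G : Type*} [MeasurableSpace G] {μ : Measure G} [AddGroup G] [MeasurableAdd₂ G]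
  [MeasurableNeg G] [SFinite μ] [μ.IsAddRightInvariant]
  {c : ℝ} {φ : ℝ → ℝ} {K : ℝ≥0} {W Z f g : G → ℝ}

theorem integrable_hammersteinMap [IsFiniteMeasure μ] (hφ : LipschitzWith K φ)
    (hW : Integrable W μ) (hZ : Integrable Z μ) (hf : Integrable f μ) :
    Integrable (hammersteinMap μ c φ W Z f) μ := by
  unfold hammersteinMap
  simp only [← convolution_mul_apply]
  have h_conv := hf.integrable_convolution (ContinuousLinearMap.mul ℝ ℝ) hW
  exact (hφ.integrable_comp (h_conv.add hZ)).const_mul c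

theorem integral_dist_hammersteinMap_le (hφ : LipschitzWith K φ) (hW : Integrable W μ)
    (hf : Integrable f μ) (hg : Integrable g μ) :
    ∫ x, dist (hammersteinMap μ c φ W Z f x) (hammersteinMap μ c φ W Z g x) ∂μ ≤
      |c| * K * (∫ x, ‖W x‖ ∂μ) * ∫ x, dist (f x) (g x) ∂μ := by
  let D := (fun y => dist (f y) (g y)) ⋆[ContinuousLinearMap.mul ℝ ℝ, μ] fun y => ‖W y‖
  have h_pt : ∀ᵐ x ∂μ,
      dist (hammersteinMap μ c φ W Z f x) (hammersteinMap μ c φ W Z g x) ≤ |c| * K * D x := by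
    filter_upwards [hf.ae_convolution_exists (ContinuousLinearMap.mul ℝ ℝ) hW,
      hg.ae_convolution_exists (ContinuousLinearMap.mul ℝ ℝ) hW] with x hfx hgx
    simp only [hammersteinMap, ← convolution_mul_apply]
    rw [Real.dist_eq, ← mul_sub, abs_mul, mul_assoc, ← Real.dist_eq]
    gcongr
    calc _ ≤ K * dist ((f ⋆[ContinuousLinearMap.mul ℝ ℝ, μ] W) x + Z x)
          ((g ⋆[ContinuousLinearMap.mul ℝ ℝ, μ] W) x + Z x) := hφ.dist_le_mul _ _
      _ ≤ K * D x := by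
        rw [dist_add_right]
        gcongr
        exact dist_convolution_mul_le hfx hgx
  have hD : Integrable D μ :=
    (hf.dist hg).integrable_convolution (ContinuousLinearMap.mul ℝ ℝ) hW.norm
  calc _ ≤ ∫ x, |c| * K * D x ∂μ :=
        integral_mono_of_nonneg (.of_forall fun _ => dist_nonneg) (hD.const_mul _) h_pt
    _ = _ := by
      rw [integral_const_mul, integral_convolution _ (hf.dist hg) hW.norm]
      simp only [ContinuousLinearMap.mul_apply']
      ring

end HammersteinMap

theorem stmt3_general (p : ℕ) [Fact p.Prime] (α : ℝ) (hα : 0 < α)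
    (W : ℤ_[p] → ℝ) (hW : Integrable W (haarZp p))
    (Z : ℤ_[p] → ℝ) (hZ : Integrable Z (haarZp p))
    (Lφ : NNReal) (φ : ℝ → ℝ) (hφ : LipschitzWith Lφ φ)
    (hcontr : (Lφ : ℝ) * (∫ x, ‖W x‖ ∂(haarZp p)) / α < 1) :
    ∃ U : ℤ_[p] → ℝ, (Integrable U (haarZp p) ∧
        U =ᵐ[haarZp p]
          fun x => (1 / α) * φ ((∫ y, W (x - y) * U y ∂(haarZp p)) + Z x)) ∧
      ∀ V : ℤ_[p] → ℝ, Integrable V (haarZp p) →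
        (V =ᵐ[haarZp p]
          fun x => (1 / α) * φ ((∫ y, W (x - y) * V y ∂(haarZp p)) + Z x)) →
        V =ᵐ[haarZp p] U := by
  let K : ℝ≥0 := ⟨Lφ * (∫ x, ‖W x‖ ∂(haarZp p)) / α, by positivity⟩
  have hK : K < 1 := hcontr
  have h_contr : ∀ f g, Integrable f (haarZp p) → Integrable g (haarZp p) →
      ∫ x, dist (hammersteinMap (haarZp p) (1 / α) φ W Z f x)
        (hammersteinMap (haarZp p) (1 / α) φ W Z g x) ∂(haarZp p) ≤
      K * ∫ x, dist (f x) (g x) ∂(haarZp p) := fun f g hf hg =>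
    (integral_dist_hammersteinMap_le hφ hW hf hg).trans_eq <| by
      rw [abs_of_pos (one_div_pos.2 hα)]
      change _ = Lφ * (∫ x, ‖W x‖ ∂(haarZp p)) / α * _
      ring
  obtain ⟨U, hU, hU_fix⟩ := exists_integrable_ae_fixed_of_integral_dist_le hK
    (fun f hf => integrable_hammersteinMap hφ hW hZ hf) h_contr
  exact ⟨U, ⟨hU, hU_fix⟩, fun V hV hV_fix =>
    ae_eq_of_ae_fixed_of_integral_dist_le hK hU hV hU_fix hV_fix (h_contr V U hV hU)⟩

theorem stmt3 (p : ℕ) [Fact p.Prime] (α : ℝ) (hα : 0 < α)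
    (W : ℤ_[p] → ℝ) (hW : Integrable W (haarZp p))
    (hWradial : ∀ x y : ℤ_[p], ‖x‖ = ‖y‖ → W x = W y)
    (Z : ℤ_[p] → ℝ) (hZ : Integrable Z (haarZp p))
    (Lφ : NNReal) (φ : ℝ → ℝ) (hφ : LipschitzWith Lφ φ)
    (hcontr : (Lφ : ℝ) * (∫ x, ‖W x‖ ∂(haarZp p)) / α < 1) :
    ∃ U : ℤ_[p] → ℝ, (Integrable U (haarZp p) ∧
        U =ᵐ[haarZp p]
          fun x => (1 / α) * φ ((∫ y, W (x - y) * U y ∂(haarZp p)) + Z x)) ∧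
      ∀ V : ℤ_[p] → ℝ, Integrable V (haarZp p) →
        (V =ᵐ[haarZp p]
          fun x => (1 / α) * φ ((∫ y, W (x - y) * V y ∂(haarZp p)) + Z x)) →
        V =ᵐ[haarZp p] U :=
  stmt3_general p α hα W hW Z hZ Lφ φ hφ hcontr
end

section
/- Let p be a prime, M ≥ 1 an integer, and F : [0,1] → ℂ continuous, viewed radially on ℤ_p. Then F(|·|_p) * 1_{S_0} = [(1 − 2p^{-1})F(1) + (1 − p^{-1}) Σ_{k=1}^{∞} p^{-k} F(p^{-k})] · 1_{S_0} + (1 − p^{-1}) F(1) · (Σ_{j=1}^{M} 1_{S_{-j}} + Ω(p^{M+1}|·|_p)). -/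
open MeasureTheory

/-- The radial function `x ↦ F(|x|_p)` on ℤ_p associated to `F : [0,1] → ℂ`. -/
noncomputable def radial (p : ℕ) [Fact p.Prime] (F : Set.Icc (0:ℝ) 1 → ℂ)
    (x : ℤ_[p]) : ℂ :=
  F ⟨‖x‖, ⟨norm_nonneg x, PadicInt.norm_le_one x⟩⟩

lemma pow_mem_Icc (p : ℕ) [Fact p.Prime] (j : ℕ) :
    ((p:ℝ))^(-(j:ℤ)) ∈ Set.Icc (0:ℝ) 1 := by
  have hp : (1:ℝ) ≤ p := by exact_mod_cast (Fact.out : p.Prime).one_le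
  exact ⟨by positivity, zpow_le_one_of_nonpos₀ hp (by simp)⟩

/-- The value F(p^{-j}). -/
noncomputable def Fval (p : ℕ) [Fact p.Prime] (F : Set.Icc (0:ℝ) 1 → ℂ) (j : ℕ) : ℂ :=
  F ⟨(p:ℝ)^(-(j:ℤ)), pow_mem_Icc p j⟩

/-- The sphere of radius p^{-j} centered at the origin in ℤ_p. -/
def sphereZp (p : ℕ) [Fact p.Prime] (j : ℕ) : Set ℤ_[p] :=
  {x : ℤ_[p] | ‖x‖ = (p:ℝ)^(-(j:ℤ))}

/-- The ball {x : |x|_p ≤ p^{-m}} in ℤ_p. -/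
def ballZp (p : ℕ) [Fact p.Prime] (m : ℕ) : Set ℤ_[p] :=
  {x : ℤ_[p] | ‖x‖ ≤ (p:ℝ)^(-(m:ℤ))}

/-! The ball `p^m ℤ_p` is a subgroup of index `p^m`, so it has Haar measure `p^{-m}`, the sphere
`S_{-k}` has measure `(1 - p⁻¹) p^{-k}`, and integrating a radial function sphere by sphere gives
`∫ F(|y|) dy = ∑ₖ (1 - p⁻¹) p^{-k} F(p^{-k})`. In an ultrametric space `|x - y| = max |x| |y|` when
`|x| ≠ |y|`. Hence for `|x| < 1` the integrand is `F(1)` on `S_0`, while for `|x| = 1` it is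
`F(|x - y|) - F(1) 1_{pℤ_p}(y)`, whose integral is `∫ F(|y|) dy - p⁻¹ F(1)` by translation
invariance. Finally `S_{-1}, …, S_{-M}, p^{M+1}ℤ_p` partition `pℤ_p`, the complement of `S_0`. -/

open scoped ENNReal Topology
open Filter Set Function

lemma one_lt_natCast_prime {p : ℕ} [Fact p.Prime] : (1 : ℝ) < p := by
  exact_mod_cast (Fact.out : p.Prime).one_lt

lemma natCast_prime_pos {p : ℕ} [Fact p.Prime] : (0 : ℝ) < p :=
  zero_lt_one.trans one_lt_natCast_prime

lemma IsUltrametricDist.norm_sub_eq_max_of_norm_ne_norm {S : Type*} [SeminormedAddGroup S]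
    [IsUltrametricDist S] {x y : S} (h : ‖x‖ ≠ ‖y‖) : ‖x - y‖ = max ‖x‖ ‖y‖ := by
  rw [sub_eq_add_neg, norm_add_eq_max_of_norm_ne_norm (by rwa [norm_neg]), norm_neg]

namespace PadicInt

variable {p : ℕ} [Fact p.Prime]

-- Makes every Haar measure on `ℤ_p` atomless, via `IsAddHaarMeasure.nullSingletonClass`.
instance : (𝓝[≠] (0 : ℤ_[p])).NeBot := by
  have hp : ‖(p : ℤ_[p])‖ < 1 := by
    rw [norm_p]; exact inv_lt_one_of_one_lt₀ one_lt_natCast_prime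
  refine Tendsto.neBot (f := fun n : ℕ => (p : ℤ_[p]) ^ n) (x := atTop) ?_
  exact tendsto_nhdsWithin_iff.2 ⟨tendsto_pow_atTop_nhds_zero_of_norm_lt_one hp,
    Eventually.of_forall fun n => pow_ne_zero n (Nat.cast_ne_zero.2 (Fact.out : p.Prime).ne_zero)⟩

end PadicInt

instance inst_s13 (p : ℕ) [Fact p.Prime] : (haarZp p).IsAddHaarMeasure :=
  Measure.isAddHaarMeasure_addHaarMeasure _

instance (p : ℕ) [Fact p.Prime] : IsProbabilityMeasure (haarZp p) :=
  ⟨Measure.addHaarMeasure_self⟩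

section Spheres

variable {p : ℕ} [Fact p.Prime]

lemma ballZp_eq_ker_toZModPow (m : ℕ) :
    ballZp p m = ((PadicInt.toZModPow m : ℤ_[p] →+* ZMod (p ^ m)) : ℤ_[p] →+ ZMod (p ^ m)).ker := by
  ext x
  rw [ballZp, mem_ofPred_eq, PadicInt.norm_le_pow_iff_mem_span_pow, ← PadicInt.ker_toZModPow]
  rfl

lemma measurableSet_ballZp (m : ℕ) : MeasurableSet (ballZp p m) :=
  (isClosed_le continuous_norm continuous_const).measurableSet

lemma measurableSet_sphereZp (j : ℕ) : MeasurableSet (sphereZp p j) :=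
  (isClosed_eq continuous_norm continuous_const).measurableSet

lemma haarZp_ballZp (m : ℕ) : haarZp p (ballZp p m) = ((p : ℝ≥0∞) ^ m)⁻¹ := by
  set H := ((PadicInt.toZModPow m : ℤ_[p] →+* ZMod (p ^ m)) : ℤ_[p] →+ ZMod (p ^ m)).ker
  have hindex : H.index = p ^ m := by
    rw [AddSubgroup.index_ker, AddMonoidHom.range_eq_top.2 (ZMod.ringHom_surjective _)]
    simp
  have : H.FiniteIndex := ⟨by simp [hindex, (Fact.out : p.Prime).ne_zero]⟩
  have h := H.index_mul_measure (ballZp_eq_ker_toZModPow (p := p) m ▸ measurableSet_ballZp m)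
    (haarZp p)
  rw [hindex, measure_univ] at h
  rw [ballZp_eq_ker_toZModPow]
  exact ENNReal.eq_inv_of_mul_eq_one_left (by rw [mul_comm]; exact_mod_cast h)

lemma haarZp_real_ballZp (m : ℕ) : (haarZp p).real (ballZp p m) = (p : ℝ) ^ (-(m : ℤ)) := by
  simp [measureReal_def, haarZp_ballZp]

lemma ballZp_succ_subset (m : ℕ) : ballZp p (m + 1) ⊆ ballZp p m := fun _ hx =>
  hx.trans (zpow_le_zpow_right₀ one_lt_natCast_prime.le (by omega))

lemma sphereZp_eq_ballZp_diff (j : ℕ) : sphereZp p j = ballZp p j \ ballZp p (j + 1) := by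
  ext x
  have h := PadicInt.norm_le_pow_iff_norm_lt_pow_add_one x (-((j + 1 : ℕ) : ℤ))
  rw [show -((j + 1 : ℕ) : ℤ) + 1 = -(j : ℤ) by push_cast; ring] at h
  simp only [sphereZp, ballZp, Set.mem_sdiff, mem_ofPred_eq, h, not_lt]
  exact le_antisymm_iff

lemma haarZp_real_sphereZp (j : ℕ) :
    (haarZp p).real (sphereZp p j) = (1 - (p : ℝ)⁻¹) * (p : ℝ) ^ (-(j : ℤ)) := by
  rw [sphereZp_eq_ballZp_diff, measureReal_sdiff (ballZp_succ_subset j) (measurableSet_ballZp _),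
    haarZp_real_ballZp, haarZp_real_ballZp, Nat.cast_succ, neg_add,
    zpow_add₀ natCast_prime_pos.ne', zpow_neg_one]
  ring

lemma mem_sphereZp_zero {x : ℤ_[p]} : x ∈ sphereZp p 0 ↔ ‖x‖ = 1 := by
  simp [sphereZp]

lemma compl_sphereZp_zero : (sphereZp p 0)ᶜ = ballZp p 1 := by
  ext x
  rw [mem_compl_iff, mem_sphereZp_zero, ballZp, mem_ofPred_eq,
    PadicInt.norm_le_pow_iff_norm_lt_pow_add_one]
  simpa using (PadicInt.norm_le_one x).lt_iff_ne.symm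

lemma iUnion_sphereZp : ⋃ k, sphereZp p k = {0}ᶜ := by
  ext x
  simp only [mem_iUnion, sphereZp, mem_ofPred_eq, mem_compl_iff, mem_singleton_iff]
  constructor
  · rintro ⟨k, hk⟩ rfl
    rw [norm_zero] at hk
    exact (zpow_pos natCast_prime_pos _).ne hk
  · exact fun hx => ⟨x.valuation, PadicInt.norm_eq_zpow_neg_valuation hx⟩

lemma pairwise_disjoint_sphereZp : Pairwise (Disjoint on sphereZp p) := by
  refine fun a b hab => disjoint_left.2 fun x ha hb => hab ?_
  have := zpow_right_injective₀ natCast_prime_pos one_lt_natCast_prime.ne'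
    ((ha : ‖x‖ = _).symm.trans hb)
  omega

lemma sum_indicator_sphereZp_add_indicator_ballZp {β : Type*} [AddCommMonoid β]
    (f : ℤ_[p] → β) (M : ℕ) (x : ℤ_[p]) :
    ∑ j ∈ Finset.Icc 1 M, (sphereZp p j).indicator f x + (ballZp p (M + 1)).indicator f x =
      (ballZp p 1).indicator f x := by
  induction M with
  | zero => simp
  | succ M ih =>
    have hsplit : (ballZp p (M + 1)).indicator f x =
        (sphereZp p (M + 1)).indicator f x + (ballZp p (M + 2)).indicator f x := by
      rw [sphereZp_eq_ballZp_diff, ← indicator_union_of_notMem_inter (fun h => h.1.2 h.2),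
        sdiff_union_of_subset (ballZp_succ_subset _)]
    rw [Finset.sum_Icc_succ_top (by omega), add_assoc, ← hsplit, ih]

end Spheres

section Radial

variable {p : ℕ} [Fact p.Prime] {F : Icc (0 : ℝ) 1 → ℂ}

lemma continuous_radial (hF : Continuous F) : Continuous (radial p F) :=
  hF.comp (continuous_norm.subtype_mk _)

lemma radial_eqOn_sphereZp (k : ℕ) : EqOn (radial p F) (fun _ => Fval p F k) (sphereZp p k) :=
  fun _ hx => congrArg F (Subtype.ext hx)

lemma hasSum_integral_radial (hF : Integrable (radial p F) (haarZp p)) :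
    HasSum (fun k : ℕ => (1 - (p : ℂ)⁻¹) * (p : ℂ) ^ (-(k : ℤ)) * Fval p F k)
      (∫ y, radial p F y ∂haarZp p) := by
  have h := hasSum_integral_iUnion measurableSet_sphereZp pairwise_disjoint_sphereZp
    hF.integrableOn
  rw [iUnion_sphereZp, restrict_compl_singleton] at h
  have hterm (k : ℕ) : ∫ y in sphereZp p k, radial p F y ∂haarZp p =
      (1 - (p : ℂ)⁻¹) * (p : ℂ) ^ (-(k : ℤ)) * Fval p F k := by
    rw [setIntegral_congr_fun (measurableSet_sphereZp k) (radial_eqOn_sphereZp k),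
      setIntegral_const, haarZp_real_sphereZp, Complex.real_smul]
    push_cast
    rfl
  simpa only [hterm] using h

lemma integral_radial (hF : Integrable (radial p F) (haarZp p)) :
    ∫ y, radial p F y ∂haarZp p = (1 - (p : ℂ)⁻¹) * Fval p F 0 +
      (1 - (p : ℂ)⁻¹) * ∑' k : ℕ, (p : ℂ) ^ (-((k : ℤ) + 1)) * Fval p F (k + 1) := by
  have h := hasSum_integral_radial hF
  rw [← h.tsum_eq, h.summable.tsum_eq_zero_add, ← tsum_mul_left]
  simp [mul_assoc]

end Radial

section Convolution

variable {p : ℕ} [Fact p.Prime] {F : Icc (0 : ℝ) 1 → ℂ}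

lemma radial_sub_eq_Fval_zero {x y : ℤ_[p]} (h : ‖x‖ ≠ ‖y‖) (h1 : ‖x‖ = 1 ∨ ‖y‖ = 1) :
    radial p F (x - y) = Fval p F 0 := by
  refine radial_eqOn_sphereZp 0 (mem_sphereZp_zero.2 ?_)
  rw [IsUltrametricDist.norm_sub_eq_max_of_norm_ne_norm h]
  rcases h1 with h1 | h1 <;> simp [h1, PadicInt.norm_le_one]

lemma integral_radial_sub_mul_indicator_of_norm_lt_one {x : ℤ_[p]} (hx : ‖x‖ < 1) :
    ∫ y, radial p F (x - y) * (sphereZp p 0).indicator (fun _ => (1 : ℂ)) y ∂haarZp p =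
      (1 - (p : ℂ)⁻¹) * Fval p F 0 := by
  have hpt (y : ℤ_[p]) : radial p F (x - y) * (sphereZp p 0).indicator (fun _ => 1) y =
      (sphereZp p 0).indicator (fun _ => Fval p F 0) y := by
    by_cases hy : y ∈ sphereZp p 0
    · have hy1 := mem_sphereZp_zero.1 hy
      rw [indicator_of_mem hy, indicator_of_mem hy, mul_one,
        radial_sub_eq_Fval_zero (hy1 ▸ hx.ne) (Or.inr hy1)]
    · rw [indicator_of_notMem hy, indicator_of_notMem hy, mul_zero]
  simp_rw [hpt]
  rw [integral_indicator_const _ (measurableSet_sphereZp 0), haarZp_real_sphereZp,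
    Complex.real_smul]
  push_cast
  simp

lemma integral_radial_sub_mul_indicator_of_norm_eq_one (hF : Integrable (radial p F) (haarZp p))
    {x : ℤ_[p]} (hx : ‖x‖ = 1) :
    ∫ y, radial p F (x - y) * (sphereZp p 0).indicator (fun _ => (1 : ℂ)) y ∂haarZp p =
      ∫ y, radial p F y ∂haarZp p - (p : ℂ)⁻¹ * Fval p F 0 := by
  have hpt (y : ℤ_[p]) : radial p F (x - y) * (sphereZp p 0).indicator (fun _ => 1) y =
      radial p F (x - y) - (sphereZp p 0)ᶜ.indicator (fun _ => Fval p F 0) y := by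
    by_cases hy : y ∈ sphereZp p 0
    · rw [indicator_of_mem hy, indicator_of_notMem (not_not.2 hy), mul_one, sub_zero]
    · rw [indicator_of_notMem hy, indicator_of_mem hy, mul_zero,
        radial_sub_eq_Fval_zero (fun h => hy (mem_sphereZp_zero.2 (h ▸ hx))) (Or.inl hx),
        sub_self]
  simp_rw [hpt]
  rw [integral_sub (hF.comp_sub_left x)
      ((integrable_const _).indicator (measurableSet_sphereZp 0).compl),
    integral_sub_left_eq_self, integral_indicator_const _ (measurableSet_sphereZp 0).compl,
    compl_sphereZp_zero, haarZp_real_ballZp, Complex.real_smul]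
  push_cast
  simp

end Convolution

theorem stmt13_general (p : ℕ) [Fact p.Prime] (M : ℕ)
    (F : Set.Icc (0:ℝ) 1 → ℂ) (hF : Continuous F) (x : ℤ_[p]) :
    (∫ y, radial p F (x - y) *
        Set.indicator (sphereZp p 0) (fun _ => (1:ℂ)) y ∂(haarZp p)) =
      ((1 - 2 * (p:ℂ)⁻¹) * Fval p F 0 +
          (1 - (p:ℂ)⁻¹) * ∑' k : ℕ, (p:ℂ)^(-((k:ℤ)+1)) * Fval p F (k + 1)) *
        Set.indicator (sphereZp p 0) (fun _ => (1:ℂ)) x +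
      (1 - (p:ℂ)⁻¹) * Fval p F 0 *
        ((∑ j ∈ Finset.Icc 1 M, Set.indicator (sphereZp p j) (fun _ => (1:ℂ)) x) +
          Set.indicator (ballZp p (M+1)) (fun _ => (1:ℂ)) x) := by
  have hint : Integrable (radial p F) (haarZp p) :=
    (continuous_radial hF).integrable_of_hasCompactSupport (HasCompactSupport.of_compactSpace _)
  rw [sum_indicator_sphereZp_add_indicator_ballZp, ← compl_sphereZp_zero]
  rcases (PadicInt.norm_le_one x).eq_or_lt with hx | hx
  · have hxS := mem_sphereZp_zero.2 hx
    rw [integral_radial_sub_mul_indicator_of_norm_eq_one hint hx, integral_radial hint,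
      indicator_of_mem hxS, indicator_of_notMem (not_not.2 hxS)]
    ring
  · have hxS : x ∉ sphereZp p 0 := fun h => hx.ne (mem_sphereZp_zero.1 h)
    rw [integral_radial_sub_mul_indicator_of_norm_lt_one hx, indicator_of_notMem hxS,
      indicator_of_mem hxS]
    ring

theorem stmt13 (p : ℕ) [Fact p.Prime] (M : ℕ) (hM : 1 ≤ M)
    (F : Set.Icc (0:ℝ) 1 → ℂ) (hF : Continuous F) (x : ℤ_[p]) :
    (∫ y, radial p F (x - y) *
        Set.indicator (sphereZp p 0) (fun _ => (1:ℂ)) y ∂(haarZp p)) =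
      ((1 - 2 * (p:ℂ)⁻¹) * Fval p F 0 +
          (1 - (p:ℂ)⁻¹) * ∑' k : ℕ, (p:ℂ)^(-((k:ℤ)+1)) * Fval p F (k + 1)) *
        Set.indicator (sphereZp p 0) (fun _ => (1:ℂ)) x +
      (1 - (p:ℂ)⁻¹) * Fval p F 0 *
        ((∑ j ∈ Finset.Icc 1 M, Set.indicator (sphereZp p j) (fun _ => (1:ℂ)) x) +
          Set.indicator (ballZp p (M+1)) (fun _ => (1:ℂ)) x) :=
  stmt13_general p M F hF x
end
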